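/- Let H be a real Hilbert space with a Hilbert (orthonormal) basis (e_l)_{l∈I}. Fix an integer k ≥ 1 and parameters α_l ∈ (0,1) for each l ∈ I. For x_1, …, x_k ∈ H with coordinates x_i^{(l)} := ⟨x_i, e_l⟩, set x̌_l := q_{α_l}(x_1^{(l)}, …, x_k^{(l)}). Then Σ_{l∈I} x̌_l² < ∞, so that q_{S,α}(x_1,…,x_k) := Σ_{l∈I} x̌_l e_l is a well-defined element of H, and for all x_1,…,x_k, z_1,…,z_k ∈ H one has ‖q_{S,α}(x_1,…,x_k) − q_{S,α}(z_1,…,z_k)‖ ≤ √(Σ_{i=1}^k ‖x_i − z_i‖²) ≤ Σ_{i=1}^k ‖x_i − z_i‖. -/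

import Mathlib

/-- The `i`-th smallest value (1-based indexing) among `x 0, …, x (k-1)`. -/
noncomputable def sortedVal {k : ℕ} (x : Fin k → ℝ) (i : ℕ) : ℝ :=
  if h : i - 1 < k then x (Tuple.sort x ⟨i - 1, h⟩) else 0

/-- The univariate `α`-quantile `q_α(x) = (x̃_{⌈kα⌉} + x̃_{⌊kα+1⌋})/2. -/
noncomputable def quant {k : ℕ} (α : ℝ) (x : Fin k → ℝ) : ℝ :=
  (sortedVal x ⌈(k : ℝ) * α⌉₊ + sortedVal x ⌊(k : ℝ) * α + 1⌋₊) / 2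

theorem sort_sub_le' {k : ℕ} (x z : Fin k → ℝ) (M : ℝ) (hM : ∀ j, x j - z j ≤ M)
    (i : Fin k) : x (Tuple.sort x i) - z (Tuple.sort z i) ≤ M := by
  by_contra h
  push_neg at h
  set A := Finset.image (Tuple.sort z) (Finset.Iic i) with hA
  set B := Finset.image (Tuple.sort x) (Finset.Ici i) with hB
  have hcardA : A.card = i + 1 := by
    rw [hA, Finset.card_image_of_injective _ (Tuple.sort z).injective, Fin.card_Iic]
  have hcardB : B.card = k - i := by
    rw [hB, Finset.card_image_of_injective _ (Tuple.sort x).injective, Fin.card_Ici]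
  have hne : (A ∩ B).Nonempty := by
    rw [← Finset.card_pos]
    have h1 : (A ∪ B).card + (A ∩ B).card = A.card + B.card :=
      Finset.card_union_add_card_inter A B
    have h2 : (A ∪ B).card ≤ k := by
      simpa using Finset.card_le_card (Finset.subset_univ (A ∪ B))
    have h3 : (i : ℕ) < k := i.isLt
    omega
  obtain ⟨a, ha⟩ := hne
  rw [Finset.mem_inter] at ha
  obtain ⟨j, hj, rfl⟩ := Finset.mem_image.mp ha.1
  obtain ⟨j', hj', hj'eq⟩ := Finset.mem_image.mp ha.2
  have h1 : z (Tuple.sort z j) ≤ z (Tuple.sort z i) :=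
    Tuple.monotone_sort z (Finset.mem_Iic.mp hj)
  have h2 : x (Tuple.sort x i) ≤ x (Tuple.sort z j) := by
    rw [← hj'eq]; exact Tuple.monotone_sort x (Finset.mem_Ici.mp hj')
  have := hM (Tuple.sort z j)
  linarith

theorem quant_abs_sub_le {k : ℕ} (α : ℝ) (x z : Fin k → ℝ) (M : ℝ) (hM0 : 0 ≤ M)
    (hM : ∀ j, |x j - z j| ≤ M) : |quant α x - quant α z| ≤ M := by
  have key : ∀ i : ℕ, |sortedVal x i - sortedVal z i| ≤ M := by
    intro i
    unfold sortedVal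
    split
    · rw [abs_le]
      constructor
      · have := sort_sub_le' z x M (fun j => by
          have := hM j; rw [abs_sub_comm] at this; exact (abs_le.mp this).2)
          ⟨i - 1, by assumption⟩
        linarith
      · exact sort_sub_le' x z M (fun j => (abs_le.mp (hM j)).2) _
    · simpa using hM0
  unfold quant
  have h1 := key ⌈(k : ℝ) * α⌉₊
  have h2 := key ⌊(k : ℝ) * α + 1⌋₊
  rw [abs_le] at h1 h2 ⊢
  constructor <;> [linarith [h1.1, h2.1]; linarith [h1.2, h2.2]]

theorem quant_sq_sub_le {k : ℕ} (α : ℝ) (x z : Fin k → ℝ) :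
    (quant α x - quant α z) ^ 2 ≤ ∑ j, (x j - z j) ^ 2 := by
  set M := Real.sqrt (∑ j, (x j - z j) ^ 2) with hMdef
  have hsum : (0:ℝ) ≤ ∑ j, (x j - z j) ^ 2 :=
    Finset.sum_nonneg fun j _ => sq_nonneg _
  have hM0 : 0 ≤ M := Real.sqrt_nonneg _
  have hM : ∀ j, |x j - z j| ≤ M := by
    intro j
    rw [hMdef, ← Real.sqrt_sq_eq_abs]
    exact Real.sqrt_le_sqrt (Finset.single_le_sum (fun j _ => sq_nonneg (x j - z j))
      (Finset.mem_univ j))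
  have := quant_abs_sub_le α x z M hM0 hM
  calc (quant α x - quant α z) ^ 2 = |quant α x - quant α z| ^ 2 := (sq_abs _).symm
    _ ≤ M ^ 2 := pow_le_pow_left₀ (abs_nonneg _) this 2
    _ = ∑ j, (x j - z j) ^ 2 := Real.sq_sqrt hsum

theorem quant_zero {k : ℕ} (α : ℝ) : quant α (fun _ : Fin k => (0:ℝ)) = 0 := by
  simp [quant, sortedVal]

/-- Component-wise quantile with respect to an orthonormal (Hilbert) basis: the
component-wise quantile of the coordinates is square-summable, defines an element
`q_{S,α}(x₁,…,x_k)` of `H` (characterised by its coordinates), and the resulting map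
satisfies the stated Lipschitz bounds. -/
theorem stmt3 {H : Type*} [NormedAddCommGroup H] [InnerProductSpace ℝ H] [CompleteSpace H]
    {I : Type*} (b : HilbertBasis I ℝ H) (k : ℕ) (hk : 1 ≤ k)
    (α : I → ℝ) (hα : ∀ l, α l ∈ Set.Ioo (0 : ℝ) 1) :
    (∀ x : Fin k → H,
      Summable fun l : I => (quant (α l) (fun i => (inner ℝ (x i) (b l) : ℝ)))^2) ∧
    ∃ Q : (Fin k → H) → H,
      (∀ (x : Fin k → H) (l : I),
        (inner ℝ (Q x) (b l) : ℝ) = quant (α l) (fun i => (inner ℝ (x i) (b l) : ℝ))) ∧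
      ∀ x z : Fin k → H,
        ‖Q x - Q z‖ ≤ Real.sqrt (∑ i, ‖x i - z i‖ ^ 2) ∧
        Real.sqrt (∑ i, ‖x i - z i‖ ^ 2) ≤ ∑ i, ‖x i - z i‖ := by
  -- inner squares are summable
  have hinner : ∀ v : H, Summable fun l : I => (inner ℝ v (b l) : ℝ) ^ 2 := by
    intro v
    exact (b.summable_inner_mul_inner v v).congr fun l => by
      rw [real_inner_comm (b l) v, ← sq]
  -- bound on quant squares
  have hbound : ∀ (x : Fin k → H) (l : I),
      (quant (α l) (fun i => (inner ℝ (x i) (b l) : ℝ))) ^ 2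
        ≤ ∑ i, (inner ℝ (x i) (b l) : ℝ) ^ 2 := by
    intro x l
    have := quant_sq_sub_le (α l) (fun i => (inner ℝ (x i) (b l) : ℝ)) (fun _ => 0)
    simpa [quant_zero] using this
  have hsummable : ∀ x : Fin k → H,
      Summable fun l : I => (quant (α l) (fun i => (inner ℝ (x i) (b l) : ℝ)))^2 := by
    intro x
    apply Summable.of_nonneg_of_le (fun l => sq_nonneg _) (hbound x)
    exact summable_sum fun i _ => hinner (x i)
  refine ⟨hsummable, ?_⟩
  -- define Q
  have hmem : ∀ x : Fin k → H,
      Memℓp (fun l : I => quant (α l) (fun i => (inner ℝ (x i) (b l) : ℝ))) 2 := by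
    intro x
    apply memℓp_gen
    have h2 : ∀ l : I, ‖quant (α l) (fun i => (inner ℝ (x i) (b l) : ℝ))‖ ^ (ENNReal.toReal 2)
        = (quant (α l) (fun i => (inner ℝ (x i) (b l) : ℝ))) ^ 2 := by
      intro l
      rw [ENNReal.toReal_ofNat, Real.rpow_two, Real.norm_eq_abs, sq_abs]
    exact (hsummable x).congr fun l => (h2 l).symm
  set Q : (Fin k → H) → H := fun x => b.repr.symm
    (⟨fun l : I => quant (α l) (fun i => (inner ℝ (x i) (b l) : ℝ)), hmem x⟩ :
      lp (fun _ : I => ℝ) 2) with hQ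
  have hcoord : ∀ (x : Fin k → H) (l : I),
      (inner ℝ (Q x) (b l) : ℝ) = quant (α l) (fun i => (inner ℝ (x i) (b l) : ℝ)) := by
    intro x l
    rw [real_inner_comm, ← b.repr_apply_apply, hQ]
    simp only [LinearIsometryEquiv.apply_symm_apply]
  refine ⟨Q, hcoord, fun x z => ?_⟩
  have hns : (0:ℝ) ≤ ∑ i, ‖x i - z i‖ ^ 2 := Finset.sum_nonneg fun i _ => sq_nonneg _
  constructor
  · -- ‖Q x - Q z‖ ≤ sqrt (∑ ‖x i - z i‖²)
    have hpars : ∀ v : H, (∑' l : I, (inner ℝ v (b l) : ℝ) ^ 2) = ‖v‖ ^ 2 := by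
      intro v
      have := b.tsum_inner_mul_inner v v
      rw [real_inner_self_eq_norm_sq] at this
      rw [← this]
      exact tsum_congr fun l => by rw [real_inner_comm (b l) v, ← sq]
    have hsq : ‖Q x - Q z‖ ^ 2 ≤ ∑ i, ‖x i - z i‖ ^ 2 := by
      rw [← hpars (Q x - Q z)]
      have hle : ∀ l : I, (inner ℝ (Q x - Q z) (b l) : ℝ) ^ 2
          ≤ ∑ i, (inner ℝ (x i - z i) (b l) : ℝ) ^ 2 := by
        intro l
        rw [inner_sub_left, hcoord x l, hcoord z l]
        have := quant_sq_sub_le (α l) (fun i => (inner ℝ (x i) (b l) : ℝ))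
          (fun i => (inner ℝ (z i) (b l) : ℝ))
        simpa [inner_sub_left] using this
      have h1 : (∑' l : I, (inner ℝ (Q x - Q z) (b l) : ℝ) ^ 2)
          ≤ ∑' l : I, ∑ i, (inner ℝ (x i - z i) (b l) : ℝ) ^ 2 :=
        Summable.tsum_le_tsum hle (hinner _) (summable_sum fun i _ => hinner _)
      have h2 : (∑' l : I, ∑ i, (inner ℝ (x i - z i) (b l) : ℝ) ^ 2)
          = ∑ i, ∑' l : I, (inner ℝ (x i - z i) (b l) : ℝ) ^ 2 :=
        Summable.tsum_finsetSum fun i _ => hinner _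
      rw [h2] at h1
      refine h1.trans ?_
      exact le_of_eq (Finset.sum_congr rfl fun i _ => hpars _)
    calc ‖Q x - Q z‖ = Real.sqrt (‖Q x - Q z‖ ^ 2) := (Real.sqrt_sq (norm_nonneg _)).symm
      _ ≤ Real.sqrt (∑ i, ‖x i - z i‖ ^ 2) := Real.sqrt_le_sqrt hsq
  · -- sqrt (∑ ‖·‖²) ≤ ∑ ‖·‖
    have h : (∑ i, ‖x i - z i‖ ^ 2) ≤ (∑ i, ‖x i - z i‖) ^ 2 := by
      rw [sq (∑ i, ‖x i - z i‖), Finset.sum_mul_sum]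
      apply Finset.sum_le_sum
      intro i _
      calc ‖x i - z i‖ ^ 2 = ‖x i - z i‖ * ‖x i - z i‖ := sq _
        _ ≤ ∑ j, ‖x i - z i‖ * ‖x j - z j‖ := by
            exact Finset.single_le_sum (f := fun j => ‖x i - z i‖ * ‖x j - z j‖)
              (fun j _ => mul_nonneg (norm_nonneg _) (norm_nonneg _)) (Finset.mem_univ i)
    calc Real.sqrt (∑ i, ‖x i - z i‖ ^ 2) ≤ Real.sqrt ((∑ i, ‖x i - z i‖) ^ 2) :=
          Real.sqrt_le_sqrt h
      _ = ∑ i, ‖x i - z i‖ := Real.sqrt_sq (Finset.sum_nonneg fun i _ => norm_nonneg _)
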